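/- Let T be the classical staircase transformation (cutting sequence r_n = n, normalized to domain [0,1)), let q ∈ (0,1) be irrational, let f be the 2-wise constant roof with values 1 on the non-spacer interval and q on the spacer interval, and let (φ_t) be the suspension flow over T under f on X. Then there exists m_0 (depending only on q) such that for every m ≥ m_0, every level I^{(m)} of the stage-m column of T, and every t ≥ 0, the horizontal projections of the finitely many horizontal segments composing φ_t(I^{(m)} × {0}) are pairwise disjoint up to null sets; in particular λ(π_x(φ_t(I^{(m)} × {0}))) = λ(I^{(m)}). -/

import Mathlib

open MeasureTheory Filter

noncomputable section

/-- Birkhoff sums `S_n(x) = ∑_{i<n} f(T^i x)` of the roof function along the base map. -/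
def birk (T f : ℝ → ℝ) (n : ℕ) (x : ℝ) : ℝ :=
  ∑ i ∈ Finset.range n, f (T^[i] x)

/-- The suspension space `X = {(x,y) : x ∈ [0,1), 0 ≤ y < f x}`. -/
def suspSpace (f : ℝ → ℝ) : Set (ℝ × ℝ) :=
  {p : ℝ × ℝ | p.1 ∈ Set.Ico (0 : ℝ) 1 ∧ p.2 ∈ Set.Ico (0 : ℝ) (f p.1)}

/-- Two-dimensional Lebesgue measure restricted to the suspension space. -/
def suspMeasure (f : ℝ → ℝ) : Measure (ℝ × ℝ) :=
  volume.restrict (suspSpace f)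

/-- The invariant measure of the suspension flow, normalized to a probability measure. -/
def suspProb (f : ℝ → ℝ) : Measure (ℝ × ℝ) :=
  (suspMeasure f Set.univ)⁻¹ • suspMeasure f

attribute [local instance] Classical.propDecidable

/-- The suspension flow at time `t ≥ 0` over the base transformation `T` under the roof `f`:
`φ_t(x,y) = (T^n x, y + t − S_n(x))` where `n ≥ 0` is the unique integer with
`S_n(x) ≤ y + t < S_{n+1}(x)` (and the identity in the degenerate case where no such `n`
exists; for a roof bounded below by a positive constant such an `n` exists and is unique). -/
def flowPt (T f : ℝ → ℝ) (t : ℝ) (p : ℝ × ℝ) : ℝ × ℝ :=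
  if h : ∃ n : ℕ, birk T f n p.1 ≤ p.2 + t ∧ p.2 + t < birk T f (n + 1) p.1 then
    (T^[h.choose] p.1, p.2 + t - birk T f h.choose p.1)
  else p

/-- A staircase cutting-and-stacking transformation of `[0,1)` with cutting sequence `r`
(used from index `1`): starting from the base interval `J = [0, x0)` (a column of height `1`),
at stage `n+1` the stage-`n` column (a stack of `h n` intervals, the `i`-th of which is
`[pos n i, pos n i + w n)`) is cut into `r (n+1)` equal-width subcolumns; the `(j+1)`-st
subcolumn (for `0 ≤ j < r (n+1)`) receives `j` spacer levels on top, taken as fresh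
subintervals of the spacer interval `[x0, 1)`, and then the subcolumns are stacked in order.
`T` maps each level of each stage onto the level directly above it by translation, and the
construction is normalized so that the total length of all intervals used equals `1`. -/
structure Staircase where
  /-- the cutting sequence (used from index `1`) -/
  r : ℕ → ℕ
  /-- the right endpoint of the base interval; `[0, x0)` is the non-spacer interval and
  `[x0, 1)` is the spacer interval -/
  x0 : ℝ
  /-- the height of the stage-`n` column -/
  h : ℕ → ℕ
  /-- the common width of the levels of the stage-`n` column -/
  w : ℕ → ℝ
  /-- the left endpoint of the `i`-th level (from the bottom, `0`-indexed) of the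
  stage-`n` column -/
  pos : ℕ → ℕ → ℝ
  /-- the a.e.-defined limit transformation -/
  T : ℝ → ℝ
  r_pos : ∀ n : ℕ, 1 ≤ r (n + 1)
  x0_mem : x0 ∈ Set.Ioo (0 : ℝ) 1
  h_zero : h 0 = 1
  h_rec : ∀ n : ℕ, h (n + 1) = r (n + 1) * h n + r (n + 1) * (r (n + 1) - 1) / 2
  w_zero : w 0 = x0
  w_rec : ∀ n : ℕ, w (n + 1) = w n / (r (n + 1) : ℝ)
  pos_zero : pos 0 0 = 0
  level_subset : ∀ n : ℕ, ∀ i < h n,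
    Set.Ico (pos n i) (pos n i + w n) ⊆ Set.Ico (0 : ℝ) 1
  level_disjoint : ∀ n : ℕ, ∀ i < h n, ∀ j < h n, i ≠ j →
    Disjoint (Set.Ico (pos n i) (pos n i + w n)) (Set.Ico (pos n j) (pos n j + w n))
  /-- cutting: the `(j+1)`-st subcolumn of the stage-`n` column sits at heights
  `j * h n + j*(j-1)/2, …` of the stage-`(n+1)` column, and its `i`-th level is the `(j+1)`-st
  vertical slice of the `i`-th stage-`n` level -/
  cut : ∀ n : ℕ, ∀ j < r (n + 1), ∀ i < h n,
    pos (n + 1) (j * h n + j * (j - 1) / 2 + i) = pos n i + (j : ℝ) * w (n + 1)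
  /-- stacking: the `(j+1)`-st subcolumn carries exactly `j` spacer levels on top, all of them
  fresh subintervals of the spacer interval `[x0, 1)` -/
  spacer_mem : ∀ n : ℕ, ∀ j < r (n + 1), ∀ k < j,
    Set.Ico (pos (n + 1) (j * h n + j * (j - 1) / 2 + h n + k))
        (pos (n + 1) (j * h n + j * (j - 1) / 2 + h n + k) + w (n + 1))
      ⊆ Set.Ico x0 1
  /-- normalization: the total length of all intervals ever used equals `1` -/
  full : Filter.Tendsto (fun n : ℕ => (h n : ℝ) * w n) Filter.atTop (nhds 1)
  /-- `T` maps each level of each stage's column onto the level directly above it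
  by translation -/
  map_level : ∀ n : ℕ, ∀ i : ℕ, i + 1 < h n →
    ∀ x ∈ Set.Ico (pos n i) (pos n i + w n), T x = x + (pos n (i + 1) - pos n i)
  measurable_T : Measurable T
  /-- `T` preserves Lebesgue measure on `[0,1)` -/
  measurePreserving_T : MeasurePreserving T
    (volume.restrict (Set.Ico (0 : ℝ) 1)) (volume.restrict (Set.Ico (0 : ℝ) 1))

/-- The `i`-th level (from the bottom) of the stage-`n` column. -/
def Staircase.level (s : Staircase) (n i : ℕ) : Set ℝ :=
  Set.Ico (s.pos n i) (s.pos n i + s.w n)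

/-- `T` is strongly mixing as a Lebesgue-measure-preserving transformation of `[0,1)`:
`λ(T^{-n} A ∩ B) → λ(A)·λ(B)` for all measurable `A, B ⊆ [0,1)`. -/
def Staircase.MixingT (s : Staircase) : Prop :=
  ∀ A B : Set ℝ, MeasurableSet A → MeasurableSet B →
    A ⊆ Set.Ico (0 : ℝ) 1 → B ⊆ Set.Ico (0 : ℝ) 1 →
    Filter.Tendsto (fun n : ℕ => volume.restrict (Set.Ico (0 : ℝ) 1) (s.T^[n] ⁻¹' A ∩ B))
      Filter.atTop (nhds (volume A * volume B))

/-- The 2-wise constant roof function, with value `p` on the non-spacer interval `[0, x0)`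
and value `q` on the spacer interval `[x0, 1)`. -/
def roof (x0 p q : ℝ) : ℝ → ℝ := fun x => if x < x0 then p else q

/-- The one-dimensional measure (total length) of a subset of the plane which is a finite
union of horizontal segments. -/
def horizMeasure (S : Set (ℝ × ℝ)) : ENNReal :=
  ∑' z : ℝ, volume {x : ℝ | (x, z) ∈ S}

/-- The set of heights `H_t(I, J', [a,b])`: those `z ∈ [a,b]` such that some point of
`I × {0}` has, at time `t` of the suspension flow, vertical coordinate `z` and horizontal
coordinate in `J'`. -/
def heightSet (T f : ℝ → ℝ) (t : ℝ) (I J' : Set ℝ) (a b : ℝ) : Set ℝ :=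
  {z : ℝ | z ∈ Set.Icc a b ∧
    ∃ y ∈ I, (flowPt T f t (y, 0)).2 = z ∧ (flowPt T f t (y, 0)).1 ∈ J'}

end

/-!
At a late stage `N` every point `y` of a stage-`m` level `I` lies, with as much room above it as
we like, in a copy of the stage-`m` column inside the stage-`N` column, and distinct copies are at
least `h m` levels apart. Hence if `T^[n₁] y₁ = T^[n₂] y₂` for `y₁, y₂ ∈ I` and `n₁ ≤ n₂`, then
`T^[n₂ - n₁] y₂ = y₁` and either `n₁ = n₂` (so `y₁ = y₂`) or `n₂ - n₁ ≥ h m`. In the second case the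
flow line of `y₂` needs time at least `(n₂ - n₁) q ≥ h m q ≥ 1` to reach `y₁`, more than a whole lap
of `y₁` (the roof is at most `1`), so `φ_t(y₁, 0)` and `φ_t(y₂, 0)` cannot both sit above the same
point. Thus `y ↦ π_x φ_t(y, 0)` is injective on `I`; being countably piecewise a translation, it
preserves length.
-/

open Set Function

theorem measure_image_eq_of_injOn_of_translate {G ι : Type*} [MeasurableSpace G] [AddGroup G]
    [MeasurableAdd G] {μ : Measure G} [μ.IsAddRightInvariant] [Countable ι] {g : G → G}
    {A : Set G} {B : ι → Set G} (c : ι → G) (hA : MeasurableSet A)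
    (hB : ∀ e, MeasurableSet (B e)) (hcover : A ⊆ ⋃ e, B e)
    (hg : ∀ e, ∀ y ∈ A ∩ B e, g y = y + c e) (hinj : InjOn g A) :
    μ (g '' A) = μ A := by
  rcases isEmpty_or_nonempty ι with hι | hι
  · simp [subset_empty_iff.mp (by simpa using hcover)]
  obtain ⟨φ, hφ⟩ := exists_surjective_nat ι
  set D := disjointed fun k => A ∩ B (φ k)
  have hDA : ⋃ k, D k = A := by
    rw [iUnion_disjointed, ← inter_iUnion, hφ.iUnion_comp B, inter_eq_left.mpr hcover]
  have hDm : ∀ k, MeasurableSet (D k) := MeasurableSet.disjointed fun k => hA.inter (hB _)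
  have hDsub : ∀ k, D k ⊆ A ∩ B (φ k) := disjointed_subset _
  have himage : ∀ k, g '' D k = (· + -c (φ k)) ⁻¹' D k := fun k => by
    rw [image_congr fun y hy => hg _ y (hDsub k hy), image_add_right]
  have hdisj : Pairwise (onFun Disjoint fun k => g '' D k) := fun k l hkl => by
    rw [onFun, disjoint_iff_inter_eq_empty,
      ← hinj.image_inter (fun y hy => (hDsub k hy).1) (fun y hy => (hDsub l hy).1),
      disjoint_iff_inter_eq_empty.mp (disjoint_disjointed _ hkl), image_empty]
  rw [← hDA, image_iUnion, measure_iUnion hdisj fun k => himage k ▸ (hDm k).preimage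
      (measurable_add_const _), measure_iUnion (disjoint_disjointed _) hDm]
  exact tsum_congr fun k => by rw [himage, measure_preimage_add_right]

section Suspension

variable {T f : ℝ → ℝ}

theorem birk_succ (n : ℕ) (x : ℝ) : birk T f (n + 1) x = birk T f n x + f (T^[n] x) :=
  Finset.sum_range_succ _ _

theorem birk_add (k n : ℕ) (x : ℝ) : birk T f (k + n) x = birk T f k x + birk T f n (T^[k] x) := by
  rw [birk, Finset.sum_range_add]
  simp only [birk, add_comm k, iterate_add_apply]

variable (T) in
theorem natCast_mul_le_birk {q : ℝ} (hfq : ∀ x, q ≤ f x) (n : ℕ) (x : ℝ) :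
    n * q ≤ birk T f n x := by
  simpa [birk] using Finset.card_nsmul_le_sum (Finset.range n) _ q fun i _ => hfq (T^[i] x)

theorem measurable_birk (hT : Measurable T) (hf : Measurable f) (n : ℕ) :
    Measurable (birk T f n) :=
  Finset.measurable_sum _ fun i _ => hf.comp (hT.iterate i)

/-- At time `t` the flow line of `(x, 0)` has hit the roof exactly `n` times. -/
def LapCount (T f : ℝ → ℝ) (t x : ℝ) (n : ℕ) : Prop :=
  birk T f n x ≤ t ∧ t < birk T f (n + 1) x

variable (T) in
theorem exists_lapCount {q t : ℝ} (hq : 0 < q) (hfq : ∀ x, q ≤ f x) (ht : 0 ≤ t) (x : ℝ) :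
    ∃ n, LapCount T f t x n := by
  have hex : ∃ n, t < birk T f n x := by
    obtain ⟨n, hn⟩ := exists_nat_gt (t / q)
    exact ⟨n, ((div_lt_iff₀ hq).mp hn).trans_le (natCast_mul_le_birk T hfq n x)⟩
  have hpos : Nat.find hex ≠ 0 := fun h => by
    have h0 : t < birk T f 0 x := h ▸ Nat.find_spec hex
    simp only [birk, Finset.range_zero, Finset.sum_empty] at h0
    linarith
  refine ⟨Nat.find hex - 1, not_lt.mp (Nat.find_min hex (by omega)), ?_⟩
  simpa [Nat.sub_add_cancel (Nat.one_le_iff_ne_zero.mpr hpos)] using Nat.find_spec hex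

theorem LapCount.unique (hf : ∀ x, 0 < f x) {t x : ℝ} {n n' : ℕ} (h : LapCount T f t x n)
    (h' : LapCount T f t x n') : n = n' := by
  have hmono : StrictMono fun n => birk T f n x :=
    strictMono_nat_of_lt_succ fun n => by rw [birk_succ]; linarith [hf (T^[n] x)]
  by_contra hne
  rcases Nat.lt_or_gt_of_ne hne with hlt | hlt
  · linarith [h.2, h'.1, hmono.monotone (Nat.succ_le_of_lt hlt)]
  · linarith [h.1, h'.2, hmono.monotone (Nat.succ_le_of_lt hlt)]

theorem flowPt_eq_of_lapCount (hf : ∀ x, 0 < f x) {t x : ℝ} {n : ℕ} (h : LapCount T f t x n) :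
    flowPt T f t (x, 0) = (T^[n] x, t - birk T f n x) := by
  have hex : ∃ k, birk T f k (x, (0 : ℝ)).1 ≤ (x, (0 : ℝ)).2 + t ∧
      (x, (0 : ℝ)).2 + t < birk T f (k + 1) (x, (0 : ℝ)).1 := ⟨n, by simpa [LapCount] using h⟩
  have hchoose : hex.choose = n := LapCount.unique hf (by simpa [LapCount] using hex.choose_spec) h
  rw [flowPt, dif_pos hex, hchoose]
  simp

theorem measurableSet_lapCount (hT : Measurable T) (hf : Measurable f) (t : ℝ) (n : ℕ) :
    MeasurableSet {x | LapCount T f t x n} :=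
  (measurableSet_le (measurable_birk hT hf n) measurable_const).inter
    (measurableSet_lt measurable_const (measurable_birk hT hf (n + 1)))

variable (T) in
theorem birk_succ_iterate_le {q : ℝ} (hfq : ∀ x, q ≤ f x) (hf1 : ∀ x, f x ≤ 1) {k : ℕ}
    (hk : 1 ≤ k * q) (n : ℕ) (x : ℝ) : birk T f (n + 1) (T^[k] x) ≤ birk T f (n + k) x := by
  rw [birk_succ, add_comm n, birk_add]
  linarith [natCast_mul_le_birk T hfq k x, hf1 (T^[n] (T^[k] x))]

end Suspension

theorem measurable_roof (x0 p q : ℝ) : Measurable (roof x0 p q) :=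
  Measurable.ite (measurableSet_lt measurable_id measurable_const) measurable_const measurable_const

theorem roof_ge {x0 q : ℝ} (hq : q ≤ 1) (x : ℝ) : q ≤ roof x0 1 q x := by
  unfold roof; split_ifs <;> linarith

theorem roof_le_one {x0 q : ℝ} (hq : q ≤ 1) (x : ℝ) : roof x0 1 q x ≤ 1 := by
  unfold roof; split_ifs <;> linarith

namespace Staircase

variable (s : Staircase)

theorem w_pos (n : ℕ) : 0 < s.w n := by
  induction n with
  | zero => rw [s.w_zero]; exact s.x0_mem.1
  | succ n ih =>
    have : (0 : ℝ) < s.r (n + 1) := by exact_mod_cast s.r_pos n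
    rw [s.w_rec]; positivity

theorem one_le_h (n : ℕ) : 1 ≤ s.h n := by
  induction n with
  | zero => rw [s.h_zero]
  | succ n ih => have := Nat.mul_le_mul (s.r_pos n) ih; rw [s.h_rec]; omega

theorem le_h (hr : ∀ n, s.r (n + 1) = n + 1) (m : ℕ) : m ≤ s.h m := by
  cases m with
  | zero => omega
  | succ n => have := Nat.mul_le_mul_left (n + 1) (s.one_le_h n); rw [s.h_rec, hr]; omega

theorem r_mul_w_succ (n : ℕ) : (s.r (n + 1) : ℝ) * s.w (n + 1) = s.w n := by
  have : (s.r (n + 1) : ℝ) ≠ 0 := by exact_mod_cast Nat.one_le_iff_ne_zero.mp (s.r_pos n)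
  rw [s.w_rec]; field_simp

/-- The height, in the stage-`(n+1)` column, of the bottom of the `(j+1)`-st subcolumn. -/
def subcolumnStart (n j : ℕ) : ℕ := j * s.h n + j * (j - 1) / 2

theorem subcolumnStart_succ (n j : ℕ) :
    s.subcolumnStart n (j + 1) = s.subcolumnStart n j + s.h n + j := by
  simp only [subcolumnStart, Nat.triangle_succ]; ring

theorem subcolumnStart_add_le {n j : ℕ} (hj : j < s.r (n + 1)) :
    s.subcolumnStart n j + s.h n + (s.r (n + 1) - 1) ≤ s.h (n + 1) := by
  have hgrow : ∀ k, s.subcolumnStart n (j + 1) + k ≤ s.subcolumnStart n (j + 1 + k) := by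
    intro k
    induction k with
    | zero => rfl
    | succ k ih => rw [← add_assoc (j + 1), s.subcolumnStart_succ n (j + 1 + k)]; omega
  have := hgrow (s.r (n + 1) - (j + 1))
  rw [s.subcolumnStart_succ, show j + 1 + (s.r (n + 1) - (j + 1)) = s.r (n + 1) by omega] at this
  rw [show s.h (n + 1) = s.subcolumnStart n (s.r (n + 1)) from s.h_rec n]
  omega

theorem level_nonempty (n i : ℕ) : (s.level n i).Nonempty :=
  nonempty_Ico.mpr (by linarith [s.w_pos n])

theorem eq_of_mem_level {n i j : ℕ} {x : ℝ} (hi : i < s.h n) (hj : j < s.h n)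
    (hxi : x ∈ s.level n i) (hxj : x ∈ s.level n j) : i = j :=
  by_contra fun hne => disjoint_left.mp (s.level_disjoint n i hi j hj hne) hxi hxj

theorem level_succ_subcolumnStart {n j i : ℕ} (hj : j < s.r (n + 1)) (hi : i < s.h n) :
    s.level (n + 1) (s.subcolumnStart n j + i) =
      Ico (s.pos n i + j * s.w (n + 1)) (s.pos n i + j * s.w (n + 1) + s.w (n + 1)) := by
  rw [level, subcolumnStart, s.cut n j hj i hi]

theorem level_succ_subset {n j i : ℕ} (hj : j < s.r (n + 1)) (hi : i < s.h n) :
    s.level (n + 1) (s.subcolumnStart n j + i) ⊆ s.level n i := by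
  have hjr : (j : ℝ) + 1 ≤ s.r (n + 1) := by exact_mod_cast hj
  have := s.r_mul_w_succ n
  rw [s.level_succ_subcolumnStart hj hi, level]
  exact Ico_subset_Ico (by nlinarith [s.w_pos (n + 1)]) (by nlinarith [s.w_pos (n + 1)])

theorem exists_mem_level_succ {n i : ℕ} (hi : i < s.h n) {x : ℝ} (hx : x ∈ s.level n i) :
    ∃ j < s.r (n + 1), x ∈ s.level (n + 1) (s.subcolumnStart n j + i) := by
  obtain ⟨h₁, h₂⟩ := hx
  have hw := s.w_pos (n + 1)
  have hd : 0 ≤ (x - s.pos n i) / s.w (n + 1) := div_nonneg (by linarith) hw.le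
  have hj : ⌊(x - s.pos n i) / s.w (n + 1)⌋₊ < s.r (n + 1) := by
    rw [Nat.floor_lt hd, div_lt_iff₀ hw, s.r_mul_w_succ]; linarith
  refine ⟨_, hj, ?_⟩
  rw [s.level_succ_subcolumnStart hj hi]
  have hle := (le_div_iff₀ hw).mp (Nat.floor_le hd)
  have hlt := (div_lt_iff₀ hw).mp (Nat.lt_floor_add_one ((x - s.pos n i) / s.w (n + 1)))
  constructor <;> nlinarith

/-- The stage-`N` column contains, from height `c` on, a copy of the stage-`m` column. -/
def IsCopy (m N c : ℕ) : Prop :=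
  c + s.h m ≤ s.h N ∧ ∀ k < s.h m, s.level N (c + k) ⊆ s.level m k

theorem isCopy_self (m : ℕ) : s.IsCopy m m 0 :=
  ⟨by simp, fun k _ => by simp⟩

variable {s}

theorem IsCopy.subcolumnStart_add {m N c j : ℕ} (hc : s.IsCopy m N c) (hj : j < s.r (N + 1)) :
    s.IsCopy m (N + 1) (s.subcolumnStart N j + c) := by
  refine ⟨by linarith [hc.1, s.subcolumnStart_add_le hj], fun k hk => ?_⟩
  rw [add_assoc]
  exact (s.level_succ_subset hj (by linarith [hc.1])).trans (hc.2 k hk)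

/-- Two copies cannot overlap: their `0`-th levels would lie in two distinct stage-`m` levels. -/
theorem IsCopy.add_le_of_lt {m N c c' : ℕ} (hc : s.IsCopy m N c) (hc' : s.IsCopy m N c')
    (hlt : c < c') : c + s.h m ≤ c' := by
  by_contra! hover
  obtain ⟨x, hx⟩ := s.level_nonempty N c'
  have hk : c' - c < s.h m := by omega
  have hx₁ : x ∈ s.level m (c' - c) := hc.2 _ hk (by rwa [Nat.add_sub_cancel' hlt.le])
  have hx₂ : x ∈ s.level m 0 := hc'.2 0 (by omega) hx
  have := s.eq_of_mem_level hk (by omega) hx₁ hx₂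
  omega

variable (s)

theorem exists_isCopy_mem {m i N : ℕ} (hi : i < s.h m) (hmN : m ≤ N) {x : ℝ}
    (hx : x ∈ s.level m i) : ∃ c, s.IsCopy m N c ∧ x ∈ s.level N (c + i) := by
  induction N, hmN using Nat.le_induction with
  | base => exact ⟨0, s.isCopy_self m, by simpa using hx⟩
  | succ N _ ih =>
    obtain ⟨c, hc, hxc⟩ := ih
    obtain ⟨j, hj, hxj⟩ := s.exists_mem_level_succ (by linarith [hc.1]) hxc
    exact ⟨_, hc.subcolumnStart_add hj, by rwa [add_assoc]⟩

theorem exists_isCopy_mem_add_lt {m i N n : ℕ} (hi : i < s.h m) (hmN : m ≤ N)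
    (hn : n < s.r (N + 1)) {x : ℝ} (hx : x ∈ s.level m i) :
    ∃ c, s.IsCopy m (N + 1) c ∧ x ∈ s.level (N + 1) (c + i) ∧ c + i + n < s.h (N + 1) := by
  obtain ⟨c, hc, hxc⟩ := s.exists_isCopy_mem hi hmN hx
  obtain ⟨j, hj, hxj⟩ := s.exists_mem_level_succ (by linarith [hc.1]) hxc
  refine ⟨_, hc.subcolumnStart_add hj, by rwa [add_assoc], ?_⟩
  have := hc.1
  have := s.subcolumnStart_add_le hj
  omega

theorem exists_le_lt_r (hr : Tendsto s.r atTop atTop) (m n : ℕ) :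
    ∃ N, m ≤ N ∧ n < s.r (N + 1) := by
  obtain ⟨a, ha⟩ := (hr.eventually_gt_atTop n).exists_forall_of_atTop
  exact ⟨a + m, by omega, ha _ (by omega)⟩

theorem iterate_eq_add {N l k : ℕ} (hk : l + k < s.h N) {x : ℝ} (hx : x ∈ s.level N l) :
    s.T^[k] x = x + (s.pos N (l + k) - s.pos N l) := by
  induction k with
  | zero => simp
  | succ k ih =>
    have e := ih (by omega)
    have hmem : s.T^[k] x ∈ s.level N (l + k) := by
      rw [e]; exact ⟨by linarith [hx.1], by linarith [hx.2]⟩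
    rw [iterate_succ_apply', s.map_level N (l + k) (by omega) _ hmem, e, ← add_assoc]
    ring

theorem iterate_mem_level {N l k : ℕ} (hk : l + k < s.h N) {x : ℝ} (hx : x ∈ s.level N l) :
    s.T^[k] x ∈ s.level N (l + k) := by
  rw [s.iterate_eq_add hk hx]; exact ⟨by linarith [hx.1], by linarith [hx.2]⟩

theorem iterate_sub_eq_of_iterate_eq {m i N n₁ n₂ : ℕ} {y₁ y₂ : ℝ} (hi : i < s.h m)
    (hmN : m ≤ N) (hn₂ : n₂ < s.r (N + 1)) (hy₁ : y₁ ∈ s.level m i) (hy₂ : y₂ ∈ s.level m i)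
    (h₁₂ : n₁ ≤ n₂) (heq : s.T^[n₁] y₁ = s.T^[n₂] y₂) :
    s.T^[n₂ - n₁] y₂ = y₁ ∧ (n₁ = n₂ ∨ n₁ + s.h m ≤ n₂) := by
  obtain ⟨c₁, hc₁, hx₁, hl₁⟩ := s.exists_isCopy_mem_add_lt hi hmN hn₂ hy₁
  obtain ⟨c₂, hc₂, hx₂, hl₂⟩ := s.exists_isCopy_mem_add_lt hi hmN hn₂ hy₂
  have hl₁' : c₁ + i + n₁ < s.h (N + 1) := by omega
  have hidx : c₁ + i + n₁ = c₂ + i + n₂ := s.eq_of_mem_level hl₁' hl₂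
    (heq ▸ s.iterate_mem_level hl₁' hx₁) (s.iterate_mem_level hl₂ hx₂)
  have e₁ := s.iterate_eq_add hl₁' hx₁
  have e₂ := s.iterate_eq_add hl₂ hx₂
  refine ⟨?_, ?_⟩
  · rw [s.iterate_eq_add (by omega) hx₂, show c₂ + i + (n₂ - n₁) = c₁ + i by omega]
    rw [hidx] at e₁
    linarith
  · rcases Nat.eq_zero_or_pos (n₂ - n₁) with h | h
    · omega
    · have := hc₂.add_le_of_lt hc₁ (by omega)
      omega

variable {q t : ℝ} {m i : ℕ}

theorem eq_of_lapCount_of_iterate_eq (hr : Tendsto s.r atTop atTop) (hq : q ≤ 1)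
    (hi : i < s.h m) (hqh : 1 ≤ q * s.h m) {y₁ y₂ : ℝ} (hy₁ : y₁ ∈ s.level m i)
    (hy₂ : y₂ ∈ s.level m i) {n₁ n₂ : ℕ} (h₁ : LapCount s.T (roof s.x0 1 q) t y₁ n₁)
    (h₂ : LapCount s.T (roof s.x0 1 q) t y₂ n₂) (heq : s.T^[n₁] y₁ = s.T^[n₂] y₂) :
    y₁ = y₂ := by
  wlog h₁₂ : n₁ ≤ n₂ generalizing y₁ y₂ n₁ n₂
  · exact (this hy₂ hy₁ h₂ h₁ heq.symm (by omega)).symm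
  obtain ⟨N, hmN, hn₂⟩ := s.exists_le_lt_r hr m n₂
  obtain ⟨hret, rfl | hgap⟩ := s.iterate_sub_eq_of_iterate_eq hi hmN hn₂ hy₁ hy₂ h₁₂ heq
  · simpa using hret.symm
  · have hq0 : 0 ≤ q := by
      by_contra! hneg
      nlinarith [(Nat.cast_nonneg (s.h m) : (0 : ℝ) ≤ s.h m)]
    have hk : 1 ≤ ((n₂ - n₁ : ℕ) : ℝ) * q := by
      have : (s.h m : ℝ) ≤ (n₂ - n₁ : ℕ) := by exact_mod_cast (by omega)
      nlinarith [mul_le_mul_of_nonneg_left this hq0]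
    have := birk_succ_iterate_le s.T (roof_ge (x0 := s.x0) hq) (roof_le_one hq) hk n₁ y₂
    rw [hret, Nat.add_sub_cancel' h₁₂] at this
    linarith [h₁.2, h₂.1]

theorem injOn_fst_flowPt (hr : Tendsto s.r atTop atTop) (hq0 : 0 < q) (hq1 : q ≤ 1)
    (hi : i < s.h m) (hqh : 1 ≤ q * s.h m) (ht : 0 ≤ t) :
    InjOn (fun y => (flowPt s.T (roof s.x0 1 q) t (y, 0)).1) (s.level m i) := by
  have hpos : ∀ x, 0 < roof s.x0 1 q x := fun x => hq0.trans_le (roof_ge hq1 x)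
  intro y₁ hy₁ y₂ hy₂ heq
  obtain ⟨n₁, h₁⟩ := exists_lapCount s.T hq0 (roof_ge hq1) ht y₁
  obtain ⟨n₂, h₂⟩ := exists_lapCount s.T hq0 (roof_ge hq1) ht y₂
  dsimp only at heq
  rw [flowPt_eq_of_lapCount hpos h₁, flowPt_eq_of_lapCount hpos h₂] at heq
  exact s.eq_of_lapCount_of_iterate_eq hr hq1 hi hqh hy₁ hy₂ h₁ h₂ heq

theorem volume_image_fst_flowPt (hr : Tendsto s.r atTop atTop) (hq0 : 0 < q) (hq1 : q ≤ 1)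
    (hi : i < s.h m) (hqh : 1 ≤ q * s.h m) (ht : 0 ≤ t) :
    volume ((fun y => (flowPt s.T (roof s.x0 1 q) t (y, 0)).1) '' s.level m i) =
      volume (s.level m i) := by
  have hpos : ∀ x, 0 < roof s.x0 1 q x := fun x => hq0.trans_le (roof_ge hq1 x)
  -- the piece `(n, N, l)`: points with `n` laps in the stage-`N` level `l`, which has `n` levels
  -- of room above it, so that the projected flow is `T^[n]`, a translation
  refine measure_image_eq_of_injOn_of_translate
    (B := fun e : ℕ × ℕ × ℕ => {y | LapCount s.T (roof s.x0 1 q) t y e.1} ∩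
      {y ∈ s.level e.2.1 e.2.2 | e.2.2 + e.1 < s.h e.2.1})
    (fun e => s.pos e.2.1 (e.2.2 + e.1) - s.pos e.2.1 e.2.2) measurableSet_Ico
    (fun e => (measurableSet_lapCount s.measurable_T (measurable_roof _ _ _) t e.1).inter
      (measurableSet_Ico.inter (MeasurableSet.const _)))
    ?_ ?_ (s.injOn_fst_flowPt hr hq0 hq1 hi hqh ht)
  · intro y hy
    obtain ⟨n, hn⟩ := exists_lapCount s.T hq0 (roof_ge hq1) ht y
    obtain ⟨N, hmN, hnN⟩ := s.exists_le_lt_r hr m n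
    obtain ⟨c, -, hyc, hroom⟩ := s.exists_isCopy_mem_add_lt hi hmN hnN hy
    exact mem_iUnion.mpr ⟨(n, N + 1, c + i), hn, hyc, hroom⟩
  · rintro ⟨n, N, l⟩ y ⟨-, hn, hyl, hroom⟩
    rw [flowPt_eq_of_lapCount hpos hn]
    exact s.iterate_eq_add hroom hyl

end Staircase

theorem horizontal_projections_disjoint_classical_staircase_general
    (s : Staircase) (hclassical : ∀ n : ℕ, s.r (n + 1) = n + 1)
    (q : ℝ) (hq0 : 0 < q) (hq1 : q < 1) :
    ∃ m0 : ℕ, ∀ m ≥ m0, ∀ i < s.h m, ∀ t : ℝ, 0 ≤ t →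
      (∀ z1 z2 : ℝ, z1 ≠ z2 →
        volume
          ({x : ℝ | (x, z1) ∈
              (fun x : ℝ => flowPt s.T (roof s.x0 1 q) t (x, 0)) '' s.level m i} ∩
            {x : ℝ | (x, z2) ∈
              (fun x : ℝ => flowPt s.T (roof s.x0 1 q) t (x, 0)) '' s.level m i}) = 0) ∧
      volume (Prod.fst '' ((fun x : ℝ => flowPt s.T (roof s.x0 1 q) t (x, 0)) '' s.level m i))
        = volume (s.level m i) := by
  refine ⟨⌈q⁻¹⌉₊, fun m hm i hi t ht => ?_⟩
  have hr : Tendsto s.r atTop atTop :=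
    (tendsto_add_atTop_iff_nat 1).mp (by simpa [hclassical] using tendsto_add_atTop_nat 1)
  have hqh : 1 ≤ q * s.h m := calc
    1 = q * q⁻¹ := (mul_inv_cancel₀ hq0.ne').symm
    _ ≤ q * s.h m := by
      gcongr
      exact (Nat.le_ceil _).trans (by exact_mod_cast hm.trans (s.le_h hclassical m))
  have hinj := s.injOn_fst_flowPt hr hq0 hq1.le hi hqh ht
  refine ⟨fun z₁ z₂ hz => ?_, ?_⟩
  · convert measure_empty (μ := volume)
    refine eq_empty_of_forall_notMem fun x ⟨⟨y₁, hy₁, he₁⟩, ⟨y₂, hy₂, he₂⟩⟩ => hz ?_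
    obtain rfl := hinj hy₁ hy₂ (by simp only [he₁, he₂])
    exact (Prod.ext_iff.mp (he₁.symm.trans he₂)).2
  · rw [← image_comp]
    exact s.volume_image_fst_flowPt hr hq0 hq1.le hi hqh ht

/-- **Lemma (no horizontal overlap, classical staircase).** Let `T` be the classical
staircase, `q ∈ (0,1)` irrational, `f` the 2-wise constant roof with values `1` and `q`,
and `(φ_t)` the suspension flow. Then there is `m_0` (depending only on `q`) such that for
every `m ≥ m_0`, every level `I^{(m)}` of the stage-`m` column, and every `t ≥ 0`, the
horizontal projections of the horizontal segments composing `φ_t(I^{(m)} × {0})` are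
pairwise disjoint up to null sets; in particular
`λ(π_x(φ_t(I^{(m)} × {0}))) = λ(I^{(m)})`. -/
theorem horizontal_projections_disjoint_classical_staircase
    (s : Staircase) (hclassical : ∀ n : ℕ, s.r (n + 1) = n + 1)
    (q : ℝ) (hq0 : 0 < q) (hq1 : q < 1) (hirr : Irrational q) :
    ∃ m0 : ℕ, ∀ m ≥ m0, ∀ i < s.h m, ∀ t : ℝ, 0 ≤ t →
      (∀ z1 z2 : ℝ, z1 ≠ z2 →
        volume
          ({x : ℝ | (x, z1) ∈
              (fun x : ℝ => flowPt s.T (roof s.x0 1 q) t (x, 0)) '' s.level m i} ∩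
            {x : ℝ | (x, z2) ∈
              (fun x : ℝ => flowPt s.T (roof s.x0 1 q) t (x, 0)) '' s.level m i}) = 0) ∧
      volume (Prod.fst '' ((fun x : ℝ => flowPt s.T (roof s.x0 1 q) t (x, 0)) '' s.level m i))
        = volume (s.level m i) :=
  horizontal_projections_disjoint_classical_staircase_general s hclassical q hq0 hq1
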